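/- arXiv:2210.11212 — 3 statements merged into one kernel-verified Lean document; each statement's English description precedes it below -/
import Mathlib

section
/- Suppose the digraph of W is quasi-strongly connected and all edge weights are nonnegative (W k l ≥ 0 for all k, l). Then for every nominal prescribed-time trajectory X with parameters ρ1, ρ2 > 0 and prescribed time T1 > 0, there exists c ∈ ℝ such that X t k = c for all nodes k and all t ≥ T1 (prescribed-time consensus within the preassigned time T1). -/
open Matrix

/-- Time-varying gain: `μ_T(t) = κ/(T − t)` for `0 ≤ t < T`, `0` otherwise. -/
noncomputable def gain (κ T t : ℝ) : ℝ := if 0 ≤ t ∧ t < T then κ / (T - t) else 0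

/-- Signed Laplacian `L = D − W` with `D k k = ∑_l |W k l|`. -/
noncomputable def sLap {N : ℕ} (W : Matrix (Fin N) (Fin N) ℝ) : Matrix (Fin N) (Fin N) ℝ :=
  Matrix.diagonal (fun k => ∑ l, |W k l|) - W

/-- Node `i` reaches node `j`: reflexive–transitive closure of the edge relation
`E i j ↔ W j i ≠ 0`. -/
def Reaches {N : ℕ} (W : Matrix (Fin N) (Fin N) ℝ) : Fin N → Fin N → Prop :=
  Relation.ReflTransGen (fun i j => W j i ≠ 0)

def StronglyConnected {N : ℕ} (W : Matrix (Fin N) (Fin N) ℝ) : Prop :=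
  ∀ i j, Reaches W i j

def QuasiStronglyConnected {N : ℕ} (W : Matrix (Fin N) (Fin N) ℝ) : Prop :=
  ∃ r, ∀ j, Reaches W r j

def WeaklyConnected {N : ℕ} (W : Matrix (Fin N) (Fin N) ℝ) : Prop :=
  ∀ i j, Relation.ReflTransGen (fun a b => W b a ≠ 0 ∨ W a b ≠ 0) i j

/-- `k` is a leader: every node reaching `k` is reached back by `k`. -/
def IsLeader {N : ℕ} (W : Matrix (Fin N) (Fin N) ℝ) (k : Fin N) : Prop :=
  ∀ j, Reaches W j k → Reaches W k j

/-- Closed strong component of a leader `k`. -/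
def CSC {N : ℕ} (W : Matrix (Fin N) (Fin N) ℝ) (k : Fin N) : Set (Fin N) :=
  {j | Reaches W j k ∧ Reaches W k j}

/-- A gauge for a node set `S`. -/
def IsGauge {N : ℕ} (W : Matrix (Fin N) (Fin N) ℝ) (S : Set (Fin N)) (g : Fin N → ℝ) : Prop :=
  (∀ k ∈ S, g k = 1 ∨ g k = -1) ∧ ∀ k ∈ S, ∀ l ∈ S, g k * W k l * g l = |W k l|

/-- Nominal prescribed-time trajectory of the protocol (4). -/
def NominalTraj {N : ℕ} (W : Matrix (Fin N) (Fin N) ℝ) (κ ρ1 ρ2 T1 : ℝ)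
    (X : ℝ → Fin N → ℝ) : Prop :=
  Continuous X ∧
  ∀ t : ℝ, 0 ≤ t → t ≠ T1 →
    HasDerivAt X ((-(ρ1 + ρ2 * gain κ T1 t)) • (sLap W).mulVec (X t)) t

/-! For nonnegative weights, `-sLap W` is a Metzler matrix with zero row sums, so
`exp (-u • sLap W)` is a stochastic matrix for `u ≥ 0`, and a root `r` reaching every node makes
column `r` of `exp (-sLap W)` positive. Each unit of time therefore shrinks `max - min` of the
flow by a fixed factor `< 1`, and the flow converges to a consensus vector. Before `T1` the
protocol is this flow run for the warped time `∫₀ᵗ (ρ1 + ρ2 μ_{T1})`, which tends to `∞` as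
`t → T1`, so `X T1` is a consensus vector; after `T1` the protocol is the plain flow, for which
a consensus vector is an equilibrium. -/

open Filter Topology Set NormedSpace

section MatrixExponential

variable {ι : Type*} [Fintype ι] [DecidableEq ι]

attribute [local instance] Matrix.linftyOpNormedAddCommGroup Matrix.linftyOpNormedRing
  Matrix.linftyOpNormedAlgebra

namespace Matrix

theorem hasSum_exp_apply (A : Matrix ι ι ℝ) (i j : ι) :
    HasSum (fun n : ℕ => (n.factorial : ℝ)⁻¹ * (A ^ n) i j) (exp A i j) :=
  Pi.hasSum.mp (Pi.hasSum.mp (exp_series_hasSum_exp' (𝕂 := ℝ) A) i) j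

theorem exp_apply_nonneg {A : Matrix ι ι ℝ} (hA : ∀ i j, 0 ≤ A i j) (i j : ι) :
    0 ≤ exp A i j :=
  (hasSum_exp_apply A i j).nonneg fun n => mul_nonneg (by positivity) (pow_apply_nonneg hA n i j)

theorem exists_pow_apply_pos_of_reflTransGen {A : Matrix ι ι ℝ} (hA : ∀ i j, 0 ≤ A i j)
    {i j : ι} (h : Relation.ReflTransGen (fun a b => 0 < A b a) j i) :
    ∃ m, 0 < (A ^ m) i j := by
  induction h with
  | refl => exact ⟨0, by simp⟩
  | @tail a b _ hab ih =>
    obtain ⟨m, hm⟩ := ih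
    refine ⟨m + 1, ?_⟩
    rw [pow_succ', mul_apply]
    exact Finset.sum_pos' (fun l _ => mul_nonneg (hA b l) (pow_apply_nonneg hA m l j))
      ⟨a, Finset.mem_univ a, mul_pos hab hm⟩

theorem exp_apply_pos_of_reflTransGen {A : Matrix ι ι ℝ} (hA : ∀ i j, 0 ≤ A i j)
    {i j : ι} (h : Relation.ReflTransGen (fun a b => 0 < A b a) j i) : 0 < exp A i j := by
  obtain ⟨m, hm⟩ := exists_pow_apply_pos_of_reflTransGen hA h
  refine lt_of_lt_of_le (by positivity) (le_hasSum (hasSum_exp_apply A i j) m fun n _ => ?_)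
  exact mul_nonneg (by positivity) (pow_apply_nonneg hA n i j)

theorem exp_smul_one (c : ℝ) : exp (c • 1 : Matrix ι ι ℝ) = Real.exp c • 1 := by
  rw [← Algebra.algebraMap_eq_smul_one, ← Algebra.algebraMap_eq_smul_one, Real.exp_eq_exp_ℝ,
    algebraMap_exp_comm]
  rfl

theorem exp_add_smul_one (A : Matrix ι ι ℝ) (c : ℝ) :
    exp (A + c • 1) = Real.exp c • exp A := by
  rw [exp_add_of_commute _ _ ((Commute.one_right A).smul_right c), exp_smul_one, mul_smul_comm,
    mul_one]

/-- `hA` says that `A` is a Metzler matrix. -/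
theorem exists_nonneg_add_smul_one {A : Matrix ι ι ℝ} (hA : ∀ i j, i ≠ j → 0 ≤ A i j) :
    ∃ c : ℝ, ∀ i j, 0 ≤ (A + c • 1) i j ∧ A i j ≤ (A + c • 1) i j := by
  refine ⟨∑ k, |A k k|, fun i j => ?_⟩
  have hc : |A i i| ≤ ∑ k, |A k k| :=
    Finset.single_le_sum (f := fun k => |A k k|) (fun k _ => abs_nonneg _) (Finset.mem_univ i)
  rcases eq_or_ne i j with rfl | hij
  · simp only [add_apply, smul_apply, one_apply_eq, smul_eq_mul, mul_one]
    constructor <;> linarith [neg_abs_le (A i i), abs_nonneg (A i i)]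
  · simp [one_apply_ne hij, hA i j hij]

theorem exp_apply_nonneg_of_metzler {A : Matrix ι ι ℝ} (hA : ∀ i j, i ≠ j → 0 ≤ A i j)
    (i j : ι) : 0 ≤ exp A i j := by
  obtain ⟨c, hc⟩ := exists_nonneg_add_smul_one hA
  have := exp_apply_nonneg (fun i j => (hc i j).1) i j
  rw [exp_add_smul_one, smul_apply, smul_eq_mul] at this
  exact nonneg_of_mul_nonneg_right this (Real.exp_pos c)

theorem exp_apply_pos_of_metzler {A : Matrix ι ι ℝ} (hA : ∀ i j, i ≠ j → 0 ≤ A i j)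
    {i j : ι} (h : Relation.ReflTransGen (fun a b => 0 < A b a) j i) : 0 < exp A i j := by
  obtain ⟨c, hc⟩ := exists_nonneg_add_smul_one hA
  have := exp_apply_pos_of_reflTransGen (fun i j => (hc i j).1)
    (Relation.ReflTransGen.mono (fun a b (hab : 0 < A b a) => hab.trans_le (hc b a).2) _ _ h)
  rw [exp_add_smul_one, smul_apply, smul_eq_mul] at this
  exact pos_of_mul_pos_right this (Real.exp_pos c).le

theorem exp_mulVec_of_mulVec_eq_zero {A : Matrix ι ι ℝ} {v : ι → ℝ} (h : A *ᵥ v = 0) :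
    exp A *ᵥ v = v := by
  have hs : HasSum (fun n : ℕ => ((n.factorial : ℝ)⁻¹ • A ^ n) *ᵥ v) (exp A *ᵥ v) :=
    (exp_series_hasSum_exp' (𝕂 := ℝ) A).map (mulVec.addMonoidHomLeft v)
      (continuous_id.matrix_mulVec continuous_const)
  refine hs.unique ?_
  convert hasSum_single (f := fun n : ℕ => ((n.factorial : ℝ)⁻¹ • A ^ n) *ᵥ v) 0 fun n hn => ?_
  · simp
  · obtain ⟨m, rfl⟩ := Nat.exists_eq_succ_of_ne_zero hn
    rw [smul_mulVec, pow_succ, ← mulVec_mulVec, h, mulVec_zero, smul_zero]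

theorem exp_neg_smul_mem_rowStochastic {L : Matrix ι ι ℝ} (hL : ∀ i j, i ≠ j → L i j ≤ 0)
    (h1 : L *ᵥ 1 = 0) {u : ℝ} (hu : 0 ≤ u) : exp ((-u) • L) ∈ rowStochastic ℝ ι := by
  refine ⟨exp_apply_nonneg_of_metzler fun i j hij => ?_, exp_mulVec_of_mulVec_eq_zero ?_⟩
  · simpa using mul_nonneg_of_nonpos_of_nonpos (neg_nonpos.2 hu) (hL i j hij)
  · rw [smul_mulVec, h1, smul_zero]

theorem exp_neg_add_smul_mulVec (L : Matrix ι ι ℝ) (u v : ℝ) (x : ι → ℝ) :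
    exp ((-(u + v)) • L) *ᵥ x = exp ((-v) • L) *ᵥ (exp ((-u) • L) *ᵥ x) := by
  rw [mulVec_mulVec, ← exp_add_of_commute _ _ (((Commute.refl L).smul_left _).smul_right _),
    ← add_smul, neg_add, add_comm]

theorem hasDerivAt_exp_neg_smul_mulVec (L : Matrix ι ι ℝ) (x : ι → ℝ) {σ : ℝ → ℝ} {σ' t : ℝ}
    (hσ : HasDerivAt σ σ' t) :
    HasDerivAt (fun s => exp ((-σ s) • L) *ᵥ x) ((-σ') • (L *ᵥ (exp ((-σ t) • L) *ᵥ x))) t := by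
  have hneg : HasDerivAt (fun s => -σ s) (-σ') t := hσ.neg
  have h := (hasDerivAt_exp_smul_const' (𝕂 := ℝ) L (-σ t)).scomp t hneg
  have := ((mulVec.addMonoidHomLeft x).toRealLinearMap
      (continuous_id.matrix_mulVec continuous_const)).hasFDerivAt.comp_hasDerivAt t h
  refine this.congr_deriv ?_
  show ((-σ') • (L * exp ((-σ t) • L))) *ᵥ x = _
  rw [smul_mulVec, mulVec_mulVec]

end Matrix

end MatrixExponential

theorem tendsto_zero_of_le_mul_comp_add_one {f : ℝ → ℝ} {θ : ℝ} (hf : Antitone f)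
    (hf0 : ∀ u, 0 ≤ f u) (hθ0 : 0 ≤ θ) (hθ1 : θ < 1) (hstep : ∀ u, f (u + 1) ≤ θ * f u) :
    Tendsto f atTop (𝓝 0) := by
  have hnat : ∀ n : ℕ, f n ≤ θ ^ n * f 0 := by
    intro n
    induction n with
    | zero => simp
    | succ n ih =>
      calc f (n + 1 : ℕ) = f (n + 1) := by push_cast; rfl
        _ ≤ θ * f n := hstep n
        _ ≤ θ * (θ ^ n * f 0) := by gcongr
        _ = θ ^ (n + 1) * f 0 := by ring
  have hgeom : Tendsto (fun u : ℝ => θ ^ ⌊u⌋₊ * f 0) atTop (𝓝 0) := by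
    simpa using ((tendsto_pow_atTop_nhds_zero_of_lt_one hθ0 hθ1).comp
      tendsto_nat_floor_atTop).mul_const (f 0)
  refine tendsto_of_tendsto_of_tendsto_of_le_of_le' tendsto_const_nhds hgeom
    (Eventually.of_forall hf0) ?_
  filter_upwards [eventually_ge_atTop 0] with u hu
  exact (hf (Nat.floor_le hu)).trans (hnat _)

theorem exists_tendsto_const_of_iSup_sub_iInf_tendsto_zero {ι α : Type*} [Finite ι] [Nonempty ι]
    [SemilatticeSup α] [Nonempty α] {y : α → ι → ℝ}
    (hM : Antitone fun u => ⨆ i, y u i) (hm : Monotone fun u => ⨅ i, y u i)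
    (h : Tendsto (fun u => (⨆ i, y u i) - ⨅ i, y u i) atTop (𝓝 0)) :
    ∃ c : ℝ, Tendsto y atTop (𝓝 fun _ => c) := by
  obtain ⟨u₀⟩ := ‹Nonempty α›
  have hbdd : BddAbove (range fun u => ⨅ i, y u i) := by
    refine ⟨⨆ i, y u₀ i, ?_⟩
    rintro _ ⟨u, rfl⟩
    obtain ⟨i⟩ := ‹Nonempty ι›
    exact (hm le_sup_left).trans <| (Finite.ciInf_le _ i).trans <|
      (Finite.le_ciSup _ i).trans (hM le_sup_right)
  have hlow := tendsto_atTop_ciSup hm hbdd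
  have hup := (hlow.add h).congr fun u => add_sub_cancel _ _
  rw [add_zero] at hup
  refine ⟨⨆ u, ⨅ i, y u i, tendsto_pi_nhds.2 fun i => ?_⟩
  exact tendsto_of_tendsto_of_tendsto_of_le_of_le hlow hup (fun u => Finite.ciInf_le _ i)
    (fun u => Finite.le_ciSup _ i)

section Consensus

variable {ι : Type*} [Fintype ι] [DecidableEq ι] {Q : Matrix ι ι ℝ} {z : ι → ℝ}

namespace Matrix

theorem mulVec_apply_le_sub_mul (hQ : Q ∈ rowStochastic ℝ ι) {M : ℝ} (hz : ∀ l, z l ≤ M)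
    (i r : ι) : (Q *ᵥ z) i ≤ M - Q i r * (M - z r) := by
  have hr : Q i r * (M - z r) ≤ ∑ l, Q i l * (M - z l) :=
    Finset.single_le_sum (f := fun l => Q i l * (M - z l))
      (fun l _ => mul_nonneg (hQ.1 i l) (sub_nonneg.2 (hz l))) (Finset.mem_univ r)
  have hsum : ∑ l, Q i l * (M - z l) = M - (Q *ᵥ z) i := by
    simp only [mul_sub, Finset.sum_sub_distrib, ← Finset.sum_mul,
      sum_row_of_mem_rowStochastic hQ, one_mul, mulVec, dotProduct]
  linarith

theorem add_mul_le_mulVec_apply (hQ : Q ∈ rowStochastic ℝ ι) {m : ℝ} (hz : ∀ l, m ≤ z l)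
    (i r : ι) : m + Q i r * (z r - m) ≤ (Q *ᵥ z) i := by
  have := mulVec_apply_le_sub_mul hQ (z := -z) (M := -m) (fun l => neg_le_neg (hz l)) i r
  simp only [mulVec_neg, Pi.neg_apply] at this
  linarith

variable [Nonempty ι]

theorem iSup_mulVec_le (hQ : Q ∈ rowStochastic ℝ ι) (z : ι → ℝ) :
    ⨆ i, (Q *ᵥ z) i ≤ ⨆ i, z i :=
  ciSup_le fun i => (mulVec_apply_le_sub_mul hQ (Finite.le_ciSup z) i i).trans <|
    sub_le_self _ (mul_nonneg (hQ.1 i i) (sub_nonneg.2 (Finite.le_ciSup z i)))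

theorem iInf_le_iInf_mulVec (hQ : Q ∈ rowStochastic ℝ ι) (z : ι → ℝ) :
    ⨅ i, z i ≤ ⨅ i, (Q *ᵥ z) i :=
  le_ciInf fun i => le_trans (le_add_of_nonneg_right
    (mul_nonneg (hQ.1 i i) (sub_nonneg.2 (Finite.ciInf_le z i))))
    (add_mul_le_mulVec_apply hQ (Finite.ciInf_le z) i i)

theorem iSup_sub_iInf_mulVec_le (hQ : Q ∈ rowStochastic ℝ ι) {r : ι} {δ : ℝ}
    (hδ : ∀ i, δ ≤ Q i r) (z : ι → ℝ) :
    (⨆ i, (Q *ᵥ z) i) - ⨅ i, (Q *ᵥ z) i ≤ (1 - δ) * ((⨆ i, z i) - ⨅ i, z i) := by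
  have hM := Finite.le_ciSup z r
  have hm := Finite.ciInf_le z r
  have hup : ⨆ i, (Q *ᵥ z) i ≤ (⨆ i, z i) - δ * ((⨆ i, z i) - z r) :=
    ciSup_le fun i => (mulVec_apply_le_sub_mul hQ (Finite.le_ciSup z) i r).trans
      (by gcongr; exact hδ i)
  have hlow : (⨅ i, z i) + δ * (z r - ⨅ i, z i) ≤ ⨅ i, (Q *ᵥ z) i :=
    le_ciInf fun i => le_trans (by gcongr; exact hδ i)
      (add_mul_le_mulVec_apply hQ (Finite.ciInf_le z) i r)
  linarith

end Matrix

theorem exists_tendsto_const_of_rowStochastic [Nonempty ι] {P : ℝ → Matrix ι ι ℝ}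
    {y : ℝ → ι → ℝ} (hP : ∀ v, 0 ≤ v → P v ∈ rowStochastic ℝ ι)
    (hy : ∀ u v, 0 ≤ v → y (u + v) = P v *ᵥ y u) {r : ι} (hr : ∀ i, 0 < P 1 i r) :
    ∃ c : ℝ, Tendsto y atTop (𝓝 fun _ => c) := by
  have hshift : ∀ u v, u ≤ v → y v = P (v - u) *ᵥ y u := fun u v huv => by
    rw [← hy u (v - u) (sub_nonneg.2 huv), add_sub_cancel]
  have hM : Antitone fun u => ⨆ i, y u i := fun u v huv => by
    show ⨆ i, y v i ≤ ⨆ i, y u i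
    rw [hshift u v huv]; exact iSup_mulVec_le (hP _ (sub_nonneg.2 huv)) _
  have hm : Monotone fun u => ⨅ i, y u i := fun u v huv => by
    show ⨅ i, y u i ≤ ⨅ i, y v i
    rw [hshift u v huv]; exact iInf_le_iInf_mulVec (hP _ (sub_nonneg.2 huv)) _
  obtain ⟨i₀, hi₀⟩ := Finite.exists_min fun i => P 1 i r
  refine exists_tendsto_const_of_iSup_sub_iInf_tendsto_zero hM hm <|
    tendsto_zero_of_le_mul_comp_add_one (θ := 1 - P 1 i₀ r) (fun u v huv => ?_) (fun u => ?_)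
      (sub_nonneg.2 (le_one_of_mem_rowStochastic (hP 1 zero_le_one))) (by linarith [hr i₀])
      (fun u => ?_)
  · linarith [hM huv, hm huv]
  · obtain ⟨i⟩ := ‹Nonempty ι›
    linarith [Finite.ciInf_le (y u) i, Finite.le_ciSup (y u) i]
  · rw [hy u 1 zero_le_one]
    exact iSup_sub_iInf_mulVec_le (hP 1 zero_le_one) hi₀ _

end Consensus

theorem hasDerivWithinAt_Ici_of_hasDerivAt_of_gt {E : Type*} [NormedAddCommGroup E]
    [NormedSpace ℝ E] {f F : ℝ → E} {a : ℝ} (hf : ContinuousWithinAt f (Ioi a) a)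
    (hF : ContinuousWithinAt F (Ioi a) a) (h : ∀ x, a < x → HasDerivAt f (F x) x) :
    HasDerivWithinAt f (F a) (Ici a) a :=
  hasDerivWithinAt_Ici_of_tendsto_deriv
    (fun x hx => (h x hx).differentiableAt.differentiableWithinAt) hf self_mem_nhdsWithin <|
      hF.tendsto.congr' <| eventually_nhdsWithin_of_forall fun x hx => (h x hx).deriv.symm

theorem ODE_solution_unique_of_smul_clm {E : Type*} [NormedAddCommGroup E] [NormedSpace ℝ E]
    (A : E →L[ℝ] E) {α : ℝ → ℝ} {C a b : ℝ} {f g : ℝ → E} (hα : ∀ t ∈ Ico a b, |α t| ≤ C)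
    (hf : ContinuousOn f (Icc a b)) (hg : ContinuousOn g (Icc a b))
    (hf' : ∀ t ∈ Ico a b, HasDerivWithinAt f (α t • A (f t)) (Ici t) t)
    (hg' : ∀ t ∈ Ico a b, HasDerivWithinAt g (α t • A (g t)) (Ici t) t) (ha : f a = g a) :
    EqOn f g (Icc a b) := fun t ht => sub_eq_zero.1 <|
  eq_zero_of_abs_deriv_le_mul_abs_self_of_eq_zero_right (f := f - g)
    (f' := fun t => α t • A ((f - g) t)) (K := C * ‖A‖)
    (hf.sub hg) (fun t ht => by simpa [map_sub, smul_sub] using (hf' t ht).sub (hg' t ht))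
    (sub_eq_zero.2 ha) (fun t ht => by
      rw [norm_smul, Real.norm_eq_abs, mul_assoc]
      exact mul_le_mul (hα t ht) (A.le_opNorm _) (by positivity) ((abs_nonneg _).trans (hα t ht)))
    t ht

section Laplacian

variable {N : ℕ} {W : Matrix (Fin N) (Fin N) ℝ}

theorem sLap_apply_of_ne {i j : Fin N} (hij : i ≠ j) : sLap W i j = -W i j := by
  simp [sLap, diagonal_apply_ne _ hij]

theorem sLap_mulVec_one (hpos : ∀ k l, 0 ≤ W k l) : sLap W *ᵥ 1 = 0 := by
  ext k
  simp [sLap, mulVec, dotProduct, diagonal_apply, abs_of_nonneg (hpos k _)]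

theorem sLap_apply_nonpos_of_ne (hpos : ∀ k l, 0 ≤ W k l) {i j : Fin N} (hij : i ≠ j) :
    sLap W i j ≤ 0 := by
  simpa [sLap_apply_of_ne hij] using hpos i j

theorem Reaches.exp_neg_sLap_apply_pos (hpos : ∀ k l, 0 ≤ W k l) {i j : Fin N}
    (h : Reaches W j i) : 0 < exp ((-1 : ℝ) • sLap W) i j := by
  refine exp_apply_pos_of_metzler (fun a b hab => ?_) ?_
  · simpa using sLap_apply_nonpos_of_ne hpos hab
  · induction h with
    | refl => rfl
    | @tail a b _ hab ih =>
      rcases eq_or_ne a b with rfl | hne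
      · exact ih -- a self-loop of the digraph, invisible in `sLap W`
      refine ih.tail ?_
      simpa [sLap_apply_of_ne hne.symm] using (hpos b a).lt_of_ne' hab

end Laplacian

section PrescribedTime

variable {κ ρ1 ρ2 T t : ℝ}

theorem gain_of_mem_Ico (ht : t ∈ Ico 0 T) : gain κ T t = κ / (T - t) := if_pos ht

theorem gain_of_le (ht : T ≤ t) : gain κ T t = 0 := if_neg fun h => (h.2.trans_le ht).false

/-- `∫₀ᵗ (ρ1 + ρ2 μ_T)` for `t < T`; it blows up as `t → T⁻`. -/
noncomputable def warpedTime (ρ1 ρ2 κ T t : ℝ) : ℝ :=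
  ρ1 * t + ρ2 * κ * (Real.log T - Real.log (T - t))

theorem warpedTime_zero : warpedTime ρ1 ρ2 κ T 0 = 0 := by simp [warpedTime]

theorem hasDerivAt_warpedTime (ht : t < T) :
    HasDerivAt (warpedTime ρ1 ρ2 κ T) (ρ1 + ρ2 * (κ / (T - t))) t := by
  have hlog : HasDerivAt (fun s => Real.log (T - s)) (-1 / (T - t)) t := by
    simpa using ((hasDerivAt_id t).const_sub T).log (sub_pos.2 ht).ne'
  refine (((hasDerivAt_id t).const_mul ρ1).add
    ((hlog.const_sub (Real.log T)).const_mul (ρ2 * κ))).congr_deriv ?_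
  field_simp

theorem tendsto_warpedTime (h : 0 < ρ2 * κ) : Tendsto (warpedTime ρ1 ρ2 κ T) (𝓝[<] T) atTop := by
  have hgap : Tendsto (fun s => T - s) (𝓝[<] T) (𝓝[>] 0) := by
    refine tendsto_nhdsWithin_of_tendsto_nhds_of_eventually_within _ ?_ ?_
    · simpa using (tendsto_const_nhds.sub tendsto_id : Tendsto (fun s => T - s) (𝓝 T) _)
        |>.mono_left nhdsWithin_le_nhds
    · filter_upwards [self_mem_nhdsWithin] with s hs using sub_pos.2 (mem_Iio.1 hs)
  have hlog := tendsto_neg_atBot_atTop.comp (Real.tendsto_log_nhdsGT_zero.comp hgap)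
  refine Tendsto.add_atTop (((continuous_const_mul ρ1).tendsto T).mono_left nhdsWithin_le_nhds) ?_
  exact (tendsto_atTop_add_const_left _ (Real.log T) hlog).const_mul_atTop h |>.congr
    fun s => by simp [sub_eq_add_neg]

end PrescribedTime

namespace NominalTraj

variable {N : ℕ} {W : Matrix (Fin N) (Fin N) ℝ} {κ ρ1 ρ2 T1 : ℝ} {X : ℝ → Fin N → ℝ}

theorem eq_exp_warpedTime (hX : NominalTraj W κ ρ1 ρ2 T1 X) {t : ℝ} (ht : t ∈ Ico 0 T1) :
    X t = exp ((-warpedTime ρ1 ρ2 κ T1 t) • sLap W) *ᵥ X 0 := by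
  have hflow : ∀ τ < T1, HasDerivAt (fun s => exp ((-warpedTime ρ1 ρ2 κ T1 s) • sLap W) *ᵥ X 0)
      ((-(ρ1 + ρ2 * (κ / (T1 - τ)))) • (sLap W *ᵥ
        (exp ((-warpedTime ρ1 ρ2 κ T1 τ) • sLap W) *ᵥ X 0))) τ :=
    fun τ hτ => hasDerivAt_exp_neg_smul_mulVec _ _ (hasDerivAt_warpedTime hτ)
  refine ODE_solution_unique_of_smul_clm (LinearMap.toContinuousLinearMap (toLin' (sLap W)))
    (α := fun τ => -(ρ1 + ρ2 * (κ / (T1 - τ)))) (C := |ρ1| + |ρ2| * (|κ| / (T1 - t)))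
    (fun τ hτ => ?_) hX.1.continuousOn
    (fun τ hτ => (hflow τ (hτ.2.trans_lt ht.2)).continuousAt.continuousWithinAt)
    (fun τ hτ => ?_) (fun τ hτ => (hflow τ (hτ.2.trans ht.2)).hasDerivWithinAt)
    (by simp [warpedTime_zero]) ⟨ht.1, le_rfl⟩
  · have hgap : 0 < T1 - t := sub_pos.2 ht.2
    calc |-(ρ1 + ρ2 * (κ / (T1 - τ)))| ≤ |ρ1| + |ρ2 * (κ / (T1 - τ))| := by
          rw [abs_neg]; exact abs_add_le _ _
      _ = |ρ1| + |ρ2| * (|κ| / (T1 - τ)) := by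
          rw [abs_mul, abs_div, abs_of_pos (show 0 < T1 - τ by linarith [hτ.2])]
      _ ≤ |ρ1| + |ρ2| * (|κ| / (T1 - t)) := by gcongr; linarith [hτ.2]
  · have h := hX.2 τ hτ.1 (hτ.2.trans ht.2).ne
    rw [gain_of_mem_Ico ⟨hτ.1, hτ.2.trans ht.2⟩] at h
    exact h.hasDerivWithinAt

theorem eq_of_ge_of_mulVec_eq_zero (hX : NominalTraj W κ ρ1 ρ2 T1 X) (hT1 : 0 ≤ T1)
    (heq : sLap W *ᵥ X T1 = 0) {t : ℝ} (ht : T1 ≤ t) : X t = X T1 := by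
  have hderiv : ∀ τ, T1 < τ → HasDerivAt X ((-ρ1) • (sLap W *ᵥ X τ)) τ := fun τ hτ => by
    simpa [gain_of_le hτ.le] using hX.2 τ (hT1.trans hτ.le) hτ.ne'
  refine ODE_solution_unique_of_smul_clm (LinearMap.toContinuousLinearMap (toLin' (sLap W)))
    (α := fun _ => -ρ1) (C := |ρ1|) (fun _ _ => (abs_neg ρ1).le) hX.1.continuousOn
    continuousOn_const (fun τ hτ => ?_) (fun τ _ => ?_) rfl ⟨ht, le_rfl⟩
  · rcases hτ.1.eq_or_lt with rfl | hlt
    · exact hasDerivWithinAt_Ici_of_hasDerivAt_of_gt (F := fun τ => (-ρ1) • (sLap W *ᵥ X τ))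
        hX.1.continuousWithinAt (by have := hX.1; fun_prop : Continuous fun τ =>
          (-ρ1) • (sLap W *ᵥ X τ)).continuousWithinAt hderiv
    · exact (hderiv τ hlt).hasDerivWithinAt
  · simpa [heq] using hasDerivWithinAt_const τ (Ici τ) (X T1)

end NominalTraj

theorem prescribed_time_consensus_quasi_nonneg_general
    {N : ℕ} (W : Matrix (Fin N) (Fin N) ℝ)
    (hQS : QuasiStronglyConnected W)
    (hpos : ∀ k l, 0 ≤ W k l)
    (κ ρ1 ρ2 T1 : ℝ) (hκ : 2 < κ) (hρ2 : 0 < ρ2) (hT1 : 0 < T1)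
    (X : ℝ → Fin N → ℝ) (hX : NominalTraj W κ ρ1 ρ2 T1 X) :
    ∃ c : ℝ, ∀ t : ℝ, T1 ≤ t → ∀ k, X t k = c := by
  obtain ⟨r, hr⟩ := hQS
  have : Nonempty (Fin N) := ⟨r⟩
  obtain ⟨c, hc⟩ := exists_tendsto_const_of_rowStochastic
    (y := fun u => exp ((-u) • sLap W) *ᵥ X 0)
    (fun v hv => exp_neg_smul_mem_rowStochastic (fun i j => sLap_apply_nonpos_of_ne hpos)
      (sLap_mulVec_one hpos) hv)
    (fun u v _ => exp_neg_add_smul_mulVec _ u v _) fun i => (hr i).exp_neg_sLap_apply_pos hpos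
  have hlim : Tendsto X (𝓝[<] T1) (𝓝 fun _ => c) := by
    have hwarp := tendsto_warpedTime (ρ1 := ρ1) (κ := κ) (T := T1) (mul_pos hρ2 (by linarith))
    refine (hc.comp hwarp).congr' ?_
    filter_upwards [Ioo_mem_nhdsLT hT1] with t ht
    exact (hX.eq_exp_warpedTime ⟨ht.1.le, ht.2⟩).symm
  have hXT1 : X T1 = fun _ => c :=
    tendsto_nhds_unique ((hX.1.tendsto T1).mono_left nhdsWithin_le_nhds) hlim
  have heq : sLap W *ᵥ X T1 = 0 := by
    rw [hXT1, show (fun _ => c) = c • (1 : Fin N → ℝ) by ext; simp, mulVec_smul,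
      sLap_mulVec_one hpos, smul_zero]
  exact ⟨c, fun t ht k => by rw [hX.eq_of_ge_of_mulVec_eq_zero hT1.le heq ht, hXT1]⟩

theorem prescribed_time_consensus_quasi_nonneg
    {N : ℕ} (hN : 2 ≤ N) (W : Matrix (Fin N) (Fin N) ℝ)
    (hdiag : ∀ k, W k k = 0)
    (hQS : QuasiStronglyConnected W)
    (hpos : ∀ k l, 0 ≤ W k l)
    (κ ρ1 ρ2 T1 : ℝ) (hκ : 2 < κ) (hρ1 : 0 < ρ1) (hρ2 : 0 < ρ2) (hT1 : 0 < T1)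
    (X : ℝ → Fin N → ℝ) (hX : NominalTraj W κ ρ1 ρ2 T1 X) :
    ∃ c : ℝ, ∀ t : ℝ, T1 ≤ t → ∀ k, X t k = c :=
  prescribed_time_consensus_quasi_nonneg_general W hQS hpos κ ρ1 ρ2 T1 hκ hρ2 hT1 X hX
end

section
/- Suppose the digraph of W is weakly connected and there exists a leader k0 such that its closed strong component C(k0) admits a gauge. Then for every nominal prescribed-time trajectory X with parameters ρ1, ρ2 > 0 and prescribed time T1 > 0, the following hold: (i) for every leader k and every gauge g for C(k), there exists c ∈ ℝ such that X t j = g j · c for all j ∈ C(k) and all t ≥ T1; (ii) for every leader k such that C(k) admits no gauge, X t j = 0 for all j ∈ C(k) and all t ≥ T1; (iii) for every follower l and all t ≥ T1, |X t l| ≤ max over leaders k of |X t k| (prescribed-time bipartite containment within the preassigned time T1). -/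
open Matrix

/-!
Near `T1` the gain `κ / (T1 - t)` is not integrable, which forces `X T1` into the kernel of the
signed Laplacian `L`; for `t > T1` the gain vanishes and the linear flow `ẋ = -ρ1 L x` keeps the
trajectory at that equilibrium. A vector `x` with `L x = 0` obeys a maximum principle: at a node
`j` where `|x|` is maximal among its in-neighbours, the row `∑ l, (|W j l| x j - W j l x l) = 0`
is a sum of nonnegative terms, so every in-neighbour `l` has `W j l x l = |W j l| x j`, in
particular `|x l| = |x j|`. Propagated backwards along paths, this makes `|x|` constant on each
closed strong component (so `x / |x|` is a gauge there unless `x` vanishes, and `g x` is constant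
for any gauge `g`), and puts the global maximum of `|x|` at a leader.
-/

section Graph

variable {N : ℕ} {W : Matrix (Fin N) (Fin N) ℝ}

theorem Reaches.backward_induction {P : Fin N → Prop} (hP : ∀ j l, W j l ≠ 0 → P j → P l)
    {i m : Fin N} (h : Reaches W i m) (hm : P m) : P i := by
  induction h using Relation.ReflTransGen.head_induction_on with
  | refl => exact hm
  | head hedge _ ih => exact hP _ _ hedge ih

theorem self_mem_CSC (k : Fin N) : k ∈ CSC W k := ⟨.refl, .refl⟩

theorem IsLeader.mem_CSC_iff {k j : Fin N} (hk : IsLeader W k) : j ∈ CSC W k ↔ Reaches W j k :=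
  ⟨And.left, fun h => ⟨h, hk j h⟩⟩

theorem IsLeader.mem_CSC_of_ne_zero {k j l : Fin N} (hk : IsLeader W k) (hj : j ∈ CSC W k)
    (hl : W j l ≠ 0) : l ∈ CSC W k :=
  hk.mem_CSC_iff.2 (.head hl hj.1)

/-- A node with the fewest ancestors among the ancestors of `j` is a leader. -/
theorem exists_isLeader_reaches (j : Fin N) : ∃ k, IsLeader W k ∧ Reaches W k j := by
  classical
  let ancestors (i : Fin N) : Finset (Fin N) := {a | Reaches W a i}
  obtain ⟨k, hkj, hmin⟩ := (ancestors j).exists_min_image (fun i => (ancestors i).card)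
    ⟨j, Finset.mem_filter.2 ⟨Finset.mem_univ _, .refl⟩⟩
  simp only [ancestors, Finset.mem_filter, Finset.mem_univ, true_and] at hkj hmin
  refine ⟨k, fun i hik => ?_, hkj⟩
  by_contra hki
  have hsub : ancestors i ⊂ ancestors k := by
    refine Finset.ssubset_iff_of_subset (fun a ha => ?_) |>.2 ⟨k, ?_, ?_⟩
    · simp only [ancestors, Finset.mem_filter, Finset.mem_univ, true_and] at ha ⊢
      exact ha.trans hik
    · exact Finset.mem_filter.2 ⟨Finset.mem_univ _, .refl⟩
    · simpa [ancestors] using hki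
  exact (Finset.card_lt_card hsub).not_ge (hmin i (hik.trans hkj))

end Graph

section Kernel

variable {N : ℕ} {W : Matrix (Fin N) (Fin N) ℝ} {x : Fin N → ℝ}

theorem sLap_mulVec_apply (x : Fin N → ℝ) (j : Fin N) :
    (sLap W *ᵥ x) j = ∑ l, (|W j l| * x j - W j l * x l) := by
  rw [sLap, sub_mulVec, Pi.sub_apply, mulVec_diagonal, Finset.sum_sub_distrib, ← Finset.sum_mul]
  rfl

theorem mul_eq_abs_mul_of_sLap_mulVec_apply_eq_zero_of_nonneg {j : Fin N}
    (hrow : (sLap W *ᵥ x) j = 0) (hle : ∀ l, W j l ≠ 0 → |x l| ≤ x j) (l : Fin N) :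
    W j l * x l = |W j l| * x j := by
  have hterm : ∀ l ∈ Finset.univ, 0 ≤ |W j l| * x j - W j l * x l := by
    intro l _
    by_cases hl : W j l = 0
    · simp [hl]
    · refine sub_nonneg.2 ?_
      calc W j l * x l ≤ |W j l * x l| := le_abs_self _
        _ = |W j l| * |x l| := abs_mul _ _
        _ ≤ |W j l| * x j := mul_le_mul_of_nonneg_left (hle l hl) (abs_nonneg _)
  rw [sLap_mulVec_apply] at hrow
  linarith [(Finset.sum_eq_zero_iff_of_nonneg hterm).1 hrow l (Finset.mem_univ l)]

theorem mul_eq_abs_mul_of_sLap_mulVec_apply_eq_zero {j : Fin N}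
    (hrow : (sLap W *ᵥ x) j = 0) (hle : ∀ l, W j l ≠ 0 → |x l| ≤ |x j|) (l : Fin N) :
    W j l * x l = |W j l| * x j := by
  rcases le_total 0 (x j) with hj | hj
  · exact mul_eq_abs_mul_of_sLap_mulVec_apply_eq_zero_of_nonneg hrow
      (fun l hl => abs_of_nonneg hj ▸ hle l hl) l
  · have hrow' : (sLap W *ᵥ -x) j = 0 := by rw [mulVec_neg, Pi.neg_apply, hrow, neg_zero]
    have := mul_eq_abs_mul_of_sLap_mulVec_apply_eq_zero_of_nonneg hrow'
      (fun l hl => by simpa [abs_of_nonpos hj] using hle l hl) l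
    simpa only [Pi.neg_apply, mul_neg, neg_inj] using this

theorem abs_eq_abs_of_mul_eq_abs_mul {w a b : ℝ} (hw : w ≠ 0) (h : w * a = |w| * b) :
    |a| = |b| := by
  have := congrArg abs h
  rw [abs_mul, abs_mul, abs_abs] at this
  exact mul_left_cancel₀ (abs_ne_zero.2 hw) this

theorem abs_eq_of_reaches_of_sLap_mulVec_eq_zero (hx : sLap W *ᵥ x = 0) {S : Set (Fin N)}
    (hS : ∀ j ∈ S, ∀ l, W j l ≠ 0 → l ∈ S) {m : Fin N} (hm : m ∈ S)
    (hmax : ∀ j ∈ S, |x j| ≤ |x m|) {i : Fin N} (hi : Reaches W i m) : |x i| = |x m| := by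
  refine (hi.backward_induction (P := fun j => j ∈ S ∧ |x j| = |x m|) ?_ ⟨hm, rfl⟩).2
  rintro j l hl ⟨hj, hjm⟩
  have hedge := mul_eq_abs_mul_of_sLap_mulVec_apply_eq_zero (congrFun hx j)
    (fun l' hl' => hjm ▸ hmax l' (hS j hj l' hl')) l
  exact ⟨hS j hj l hl, (abs_eq_abs_of_mul_eq_abs_mul hl hedge).trans hjm⟩

theorem exists_isLeader_abs_le_of_sLap_mulVec_eq_zero (hx : sLap W *ᵥ x = 0) (l : Fin N) :
    ∃ k, IsLeader W k ∧ |x l| ≤ |x k| := by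
  obtain ⟨m, -, hmax⟩ := Finset.univ.exists_max_image (fun j => |x j|) ⟨l, Finset.mem_univ l⟩
  obtain ⟨k, hk, hkm⟩ := exists_isLeader_reaches (W := W) m
  have hkm := abs_eq_of_reaches_of_sLap_mulVec_eq_zero hx (S := Set.univ) (by simp)
    (Set.mem_univ m) (fun j _ => hmax j (Finset.mem_univ j)) hkm
  exact ⟨k, hk, hkm ▸ hmax l (Finset.mem_univ l)⟩

namespace IsLeader

variable {k : Fin N}

theorem exists_abs_eq_on_CSC (hk : IsLeader W k) (hx : sLap W *ᵥ x = 0) :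
    ∃ M, ∀ j ∈ CSC W k, |x j| = M := by
  obtain ⟨m, hm, hmax⟩ := (CSC W k).exists_max_image (fun j => |x j|) (Set.toFinite _)
    ⟨k, self_mem_CSC k⟩
  exact ⟨|x m|, fun j hj => abs_eq_of_reaches_of_sLap_mulVec_eq_zero hx
    (fun _ hj _ hl => hk.mem_CSC_of_ne_zero hj hl) hm hmax (hj.1.trans hm.2)⟩

theorem mul_eq_abs_mul_on_CSC (hk : IsLeader W k) (hx : sLap W *ᵥ x = 0) {j : Fin N}
    (hj : j ∈ CSC W k) (l : Fin N) : W j l * x l = |W j l| * x j := by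
  obtain ⟨M, hM⟩ := hk.exists_abs_eq_on_CSC hx
  exact mul_eq_abs_mul_of_sLap_mulVec_apply_eq_zero (congrFun hx j)
    (fun l hl => (hM l (hk.mem_CSC_of_ne_zero hj hl)).trans (hM j hj).symm |>.le) l

theorem isGauge_div (hk : IsLeader W k) (hx : sLap W *ᵥ x = 0) {M : ℝ}
    (hM : ∀ j ∈ CSC W k, |x j| = M) (hM0 : M ≠ 0) : IsGauge W (CSC W k) (fun j => x j / M) := by
  refine ⟨fun j hj => ?_, fun j hj l _ => ?_⟩
  · have : |x j / M| = 1 := by rw [abs_div, hM j hj, abs_of_nonneg ((hM j hj) ▸ abs_nonneg _),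
      div_self hM0]
    exact (abs_eq zero_le_one).1 this
  · have hsq : x j * x j = M * M := by rw [← abs_mul_abs_self, hM j hj]
    field_simp
    linear_combination x j * hk.mul_eq_abs_mul_on_CSC hx hj l + |W j l| * hsq

theorem eq_zero_on_CSC (hk : IsLeader W k) (hx : sLap W *ᵥ x = 0)
    (hunbal : ¬ ∃ g : Fin N → ℝ, IsGauge W (CSC W k) g) : ∀ j ∈ CSC W k, x j = 0 := by
  obtain ⟨M, hM⟩ := hk.exists_abs_eq_on_CSC hx
  obtain rfl : M = 0 := by
    by_contra hM0
    exact hunbal ⟨_, hk.isGauge_div hx hM hM0⟩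
  exact fun j hj => abs_eq_zero.1 (hM j hj)

/-- Multiplying the edge relation `W j l * x l = |W j l| * x j` by the gauge relation
`g j * W j l * g l = |W j l|` shows that `g * x` is constant along the edges of `CSC W k`. -/
theorem exists_eq_gauge_mul (hk : IsLeader W k) (hx : sLap W *ᵥ x = 0) {g : Fin N → ℝ}
    (hg : IsGauge W (CSC W k) g) : ∃ c, ∀ j ∈ CSC W k, x j = g j * c := by
  have hg2 : ∀ j ∈ CSC W k, g j * g j = 1 := fun j hj => by
    rcases hg.1 j hj with h | h <;> simp [h]
  have hprop : ∀ j l, W j l ≠ 0 → j ∈ CSC W k ∧ g j * x j = g k * x k →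
      l ∈ CSC W k ∧ g l * x l = g k * x k := by
    rintro j l hl ⟨hj, hjk⟩
    have hlC := hk.mem_CSC_of_ne_zero hj hl
    refine ⟨hlC, hjk ▸ mul_left_cancel₀ hl ?_⟩
    linear_combination g l * hk.mul_eq_abs_mul_on_CSC hx hj l - g l * x j * hg.2 j hj l hlC
      + g j * W j l * x j * hg2 l hlC
  refine ⟨g k * x k, fun j hj => ?_⟩
  have hjk := (hj.1.backward_induction hprop ⟨self_mem_CSC k, rfl⟩).2
  linear_combination g j * hjk - x j * hg2 j hj

end IsLeader

end Kernel

section Analysis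

open Filter Topology Set

theorem HasDerivAt.const_dotProduct {ι : Type*} [Fintype ι] {f : ℝ → ι → ℝ} {f' : ι → ℝ}
    {t : ℝ} (v : ι → ℝ) (hf : HasDerivAt f f' t) :
    HasDerivAt (fun s => v ⬝ᵥ f s) (v ⬝ᵥ f') t := by
  simpa only [dotProduct] using
    HasDerivAt.fun_sum fun i _ => (hasDerivAt_pi.1 hf i).const_mul (v i)

/-- `h + C * log (T - t)` is antitone on `[t₀, T)`, and `log (T - t) → -∞` as `t → T⁻`. -/
theorem tendsto_atBot_of_hasDerivAt_le_neg_div {h h' : ℝ → ℝ} {t₀ T C : ℝ} (hC : 0 < C)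
    (ht₀ : t₀ < T) (hd : ∀ t ∈ Ico t₀ T, HasDerivAt h (h' t) t)
    (hle : ∀ t ∈ Ico t₀ T, h' t ≤ -C / (T - t)) : Tendsto h (𝓝[<] T) atBot := by
  set G : ℝ → ℝ := fun t => h t - C * Real.log (T - t)
  have hGd : ∀ t ∈ Ico t₀ T, HasDerivAt G (h' t + C / (T - t)) t := fun t ht => by
    have hlog := ((hasDerivAt_id' t).const_sub T).log (sub_ne_zero.2 ht.2.ne')
    exact ((hd t ht).fun_sub (hlog.const_mul C)).congr_deriv (by ring)
  have hanti : AntitoneOn G (Ico t₀ T) := by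
    refine antitoneOn_of_hasDerivWithinAt_nonpos (f' := fun t => h' t + C / (T - t))
      (convex_Ico t₀ T)
      (fun t ht => (hGd t ht).continuousAt.continuousWithinAt) (fun t ht => ?_) (fun t ht => ?_)
    · exact (hGd t (interior_subset ht)).hasDerivWithinAt
    · linarith [hle t (interior_subset ht), neg_div (T - t) C]
  have hlog : Tendsto (fun t => Real.log (T - t)) (𝓝[<] T) atBot := by
    refine Real.tendsto_log_nhdsGT_zero.comp
      (tendsto_nhdsWithin_of_tendsto_nhds_of_eventually_within _ ?_ ?_)
    · simpa using ((continuous_sub_left T).tendsto T).mono_left nhdsWithin_le_nhds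
    · filter_upwards [self_mem_nhdsWithin] with t (ht : t < T) using sub_pos.2 ht
  refine tendsto_atBot_mono' _ ?_
    (tendsto_atBot_add_const_left _ (G t₀) (hlog.const_mul_atBot hC))
  filter_upwards [Ico_mem_nhdsLT ht₀] with t ht
  have := hanti ⟨le_rfl, ht₀⟩ ht ht.1
  simp only [G] at this
  linarith

/-- The right derivative at `a` is recovered from the limit of the derivative, so uniqueness of
solutions of `ẋ = A x` applies from `a` on. -/
theorem eq_of_hasDerivAt_mulVec_of_mulVec_eq_zero {ι : Type*} [Fintype ι]
    (A : Matrix ι ι ℝ) {f : ℝ → ι → ℝ} {a : ℝ} (hf : ContinuousOn f (Ici a))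
    (hd : ∀ t, a < t → HasDerivAt f (A *ᵥ f t) t) (ha : A *ᵥ f a = 0) :
    ∀ t, a ≤ t → f t = f a := by
  have hda : HasDerivWithinAt f 0 (Ici a) a := by
    refine hasDerivWithinAt_Ici_of_tendsto_deriv (s := Ioi a)
      (fun t ht => (hd t ht).differentiableAt.differentiableWithinAt)
      ((hf a self_mem_Ici).mono Ioi_subset_Ici_self) self_mem_nhdsWithin ?_
    have hlim : Tendsto (fun t => A *ᵥ f t) (𝓝[>] a) (𝓝 (A *ᵥ f a)) :=
      ((continuous_const.matrix_mulVec continuous_id).tendsto _).comp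
        ((hf a self_mem_Ici).mono Ioi_subset_Ici_self).tendsto
    rw [ha] at hlim
    exact hlim.congr' (eventually_nhdsWithin_of_forall fun t ht => (hd t ht).deriv.symm)
  intro t ht
  have hode := ODE_solution_unique_of_mem_Icc_right (v := fun _ y => A *ᵥ y)
    (s := fun _ => univ) (b := t)
    (fun _ _ => (Matrix.mulVecLin A).toContinuousLinearMap.lipschitz.lipschitzOnWith)
    (hf.mono Icc_subset_Ici_self) (fun s hs => ?_) (fun _ _ => mem_univ _)
    continuousOn_const (fun _ _ => ha ▸ hasDerivWithinAt_const _ _ _) (fun _ _ => mem_univ _) rfl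
  · exact hode ⟨ht, le_rfl⟩
  · rcases hs.1.eq_or_lt with rfl | has
    · exact ha ▸ hda
    · exact (hd s has).hasDerivWithinAt

end Analysis

section Trajectory

open Filter Topology Set

theorem gain_eq_div {κ T t : ℝ} (h0 : 0 ≤ t) (hT : t < T) : gain κ T t = κ / (T - t) :=
  if_pos ⟨h0, hT⟩

theorem gain_eq_zero_of_le {κ T t : ℝ} (hT : T ≤ t) : gain κ T t = 0 :=
  if_neg fun h => hT.not_gt h.2

variable {N : ℕ} {W : Matrix (Fin N) (Fin N) ℝ} {κ ρ1 ρ2 T1 : ℝ} {X : ℝ → Fin N → ℝ}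

/-- If `v = L X(T₁)` were nonzero, then near `T₁` the derivative of `v ⬝ᵥ X t` would be at most
`-C / (T₁ - t)` for some `C > 0`, so `v ⬝ᵥ X t` would diverge as `t → T₁⁻`. -/
theorem NominalTraj.sLap_mulVec_eq_zero (hX : NominalTraj W κ ρ1 ρ2 T1 X) (hκ : 0 < κ)
    (hρ1 : 0 ≤ ρ1) (hρ2 : 0 < ρ2) (hT1 : 0 < T1) : sLap W *ᵥ X T1 = 0 := by
  by_contra hv
  set v := sLap W *ᵥ X T1
  set q : ℝ → ℝ := fun t => v ⬝ᵥ (sLap W *ᵥ X t)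
  have hq0 : 0 < q T1 := lt_of_le_of_ne (Finset.sum_nonneg fun i _ => mul_self_nonneg (v i))
    (Ne.symm (mt dotProduct_self_eq_zero.1 hv))
  have hnear : ∀ᶠ t in 𝓝[<] T1, 0 ≤ t ∧ q T1 / 2 < q t :=
    ((lt_mem_nhds hT1).and ((continuous_const.dotProduct
      (continuous_const.matrix_mulVec hX.1)).continuousAt.eventually
        (lt_mem_nhds (half_lt_self hq0)))).filter_mono nhdsWithin_le_nhds |>.mono
      fun t ht => ⟨ht.1.le, ht.2⟩
  obtain ⟨t₀, ht₀, hsub⟩ := mem_nhdsLT_iff_exists_Ico_subset.1 hnear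
  have hbound : ∀ t ∈ Ico t₀ T1,
      v ⬝ᵥ ((-(ρ1 + ρ2 * gain κ T1 t)) • sLap W *ᵥ X t) ≤ -(ρ2 * κ * (q T1 / 2)) / (T1 - t) := by
    intro t ht
    obtain ⟨ht0, hqt⟩ := hsub ht
    have hμ : 0 < ρ2 * κ / (T1 - t) := div_pos (mul_pos hρ2 hκ) (sub_pos.2 ht.2)
    rw [dotProduct_smul, smul_eq_mul, gain_eq_div ht0 ht.2, neg_div,
      show ρ2 * κ * (q T1 / 2) / (T1 - t) = ρ2 * κ / (T1 - t) * (q T1 / 2) by ring,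
      show ρ2 * (κ / (T1 - t)) = ρ2 * κ / (T1 - t) by ring]
    nlinarith [mul_le_mul_of_nonneg_left hqt.le hμ.le,
      mul_nonneg hρ1 ((half_pos hq0).trans hqt).le]
  have hdiv := tendsto_atBot_of_hasDerivAt_le_neg_div (by positivity) ht₀
    (fun t ht => (hX.2 t (hsub ht).1 ht.2.ne).const_dotProduct v) hbound
  exact not_tendsto_atBot_of_tendsto_nhds
    (((continuous_const.dotProduct hX.1).tendsto T1).mono_left nhdsWithin_le_nhds) hdiv

theorem NominalTraj.eq_of_le (hX : NominalTraj W κ ρ1 ρ2 T1 X) (hT1 : 0 ≤ T1)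
    (hker : sLap W *ᵥ X T1 = 0) : ∀ t, T1 ≤ t → X t = X T1 := by
  refine eq_of_hasDerivAt_mulVec_of_mulVec_eq_zero ((-ρ1) • sLap W) hX.1.continuousOn
    (fun t ht => ?_) (by rw [smul_mulVec, hker, smul_zero])
  simpa only [gain_eq_zero_of_le ht.le, mul_zero, add_zero, smul_mulVec] using
    hX.2 t (hT1.trans ht.le) ht.ne'

end Trajectory

theorem prescribed_time_bipartite_containment_general
    {N : ℕ} (W : Matrix (Fin N) (Fin N) ℝ)
    (κ ρ1 ρ2 T1 : ℝ) (hκ : 2 < κ) (hρ1 : 0 < ρ1) (hρ2 : 0 < ρ2) (hT1 : 0 < T1)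
    (X : ℝ → Fin N → ℝ) (hX : NominalTraj W κ ρ1 ρ2 T1 X) :
    (∀ k, IsLeader W k → ∀ g : Fin N → ℝ, IsGauge W (CSC W k) g →
      ∃ c : ℝ, ∀ j ∈ CSC W k, ∀ t : ℝ, T1 ≤ t → X t j = g j * c) ∧
    (∀ k, IsLeader W k → (¬ ∃ g : Fin N → ℝ, IsGauge W (CSC W k) g) →
      ∀ j ∈ CSC W k, ∀ t : ℝ, T1 ≤ t → X t j = 0) ∧
    (∀ l, ¬ IsLeader W l → ∀ t : ℝ, T1 ≤ t →
      ∃ k, IsLeader W k ∧ |X t l| ≤ |X t k|) := by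
  have hker := hX.sLap_mulVec_eq_zero (by linarith) hρ1.le hρ2 hT1
  have hfrozen := hX.eq_of_le hT1.le hker
  refine ⟨fun k hk g hg => ?_, fun k hk hunbal j hj t ht => ?_, fun l _ t ht => ?_⟩
  · obtain ⟨c, hc⟩ := hk.exists_eq_gauge_mul hker hg
    exact ⟨c, fun j hj t ht => hfrozen t ht ▸ hc j hj⟩
  · exact hfrozen t ht ▸ hk.eq_zero_on_CSC hker hunbal j hj
  · exact hfrozen t ht ▸ exists_isLeader_abs_le_of_sLap_mulVec_eq_zero hker l

theorem prescribed_time_bipartite_containment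
    {N : ℕ} (hN : 2 ≤ N) (W : Matrix (Fin N) (Fin N) ℝ)
    (hdiag : ∀ k, W k k = 0)
    (hWC : WeaklyConnected W)
    (hbal : ∃ k0, IsLeader W k0 ∧ ∃ g : Fin N → ℝ, IsGauge W (CSC W k0) g)
    (κ ρ1 ρ2 T1 : ℝ) (hκ : 2 < κ) (hρ1 : 0 < ρ1) (hρ2 : 0 < ρ2) (hT1 : 0 < T1)
    (X : ℝ → Fin N → ℝ) (hX : NominalTraj W κ ρ1 ρ2 T1 X) :
    (∀ k, IsLeader W k → ∀ g : Fin N → ℝ, IsGauge W (CSC W k) g →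
      ∃ c : ℝ, ∀ j ∈ CSC W k, ∀ t : ℝ, T1 ≤ t → X t j = g j * c) ∧
    (∀ k, IsLeader W k → (¬ ∃ g : Fin N → ℝ, IsGauge W (CSC W k) g) →
      ∀ j ∈ CSC W k, ∀ t : ℝ, T1 ≤ t → X t j = 0) ∧
    (∀ l, ¬ IsLeader W l → ∀ t : ℝ, T1 ≤ t →
      ∃ k, IsLeader W k ∧ |X t l| ≤ |X t k|) :=
  prescribed_time_bipartite_containment_general W κ ρ1 ρ2 T1 hκ hρ1 hρ2 hT1 X hX
end

section
/- Let N ≥ 1, T_r > 0, κ > 2, δ ≥ 0, μ1 > δ, μ2 > 0 and μ3 > 0. Let σ : ℝ → (Fin N → ℝ) be continuous, let d : ℝ → (Fin N → ℝ) satisfy |d k t| ≤ δ for all k and t ≥ 0, and suppose there is a selection s : ℝ → (Fin N → ℝ) with |s k t| ≤ 1 for all k, t and s k t · (σ t k) = |σ t k| for all k, t, such that for every node k and every t ≥ 0 with t ≠ T_r, the function t ↦ σ t k is differentiable at t with derivative −μ1 · s k t − (μ2 + μ3 · μ_{T_r}(t)) · σ t k + d k t. Then ‖σ t‖ ≤ ((T_r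 − t)/T_r)^(κ·μ3) · exp(−μ2·t) · ‖σ 0‖ for all t ∈ [0, T_r), and σ t = 0 for all t ≥ T_r (the sliding manifold {σ = 0} is reached within the prescribed finite time T_r and is invariant thereafter). -/
/-- If `f` is continuous on `[a,b]`, differentiable on `(a,b)` with `f * f' ≤ 0` there,
then `f b ^ 2 ≤ f a ^ 2`. -/
lemma sq_le_sq_of_deriv_mul_nonpos {f : ℝ → ℝ} {a b : ℝ} (hab : a ≤ b)
    (hf : ContinuousOn f (Set.Icc a b))
    (hf' : ∀ x ∈ Set.Ioo a b, ∃ f', HasDerivAt f f' x ∧ f x * f' ≤ 0) :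
    f b ^ 2 ≤ f a ^ 2 := by
  have hF : AntitoneOn (fun x => f x ^ 2) (Set.Icc a b) := by
    apply antitoneOn_of_deriv_nonpos (convex_Icc a b) (hf.pow 2)
    · intro x hx
      rw [interior_Icc] at hx
      obtain ⟨f', hf', _⟩ := hf' x hx
      exact (hf'.pow 2).differentiableAt.differentiableWithinAt
    · intro x hx
      rw [interior_Icc] at hx
      obtain ⟨f', hf', hle⟩ := hf' x hx
      rw [(hf'.pow 2).deriv]
      have h2 : ((2 : ℕ) : ℝ) * f x ^ (2 - 1) * f' = 2 * (f x * f') := by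
        norm_num; ring
      rw [h2]
      linarith
  exact hF (Set.left_mem_Icc.mpr hab) (Set.right_mem_Icc.mpr hab) hab

theorem sliding_manifold_prescribed_time
    (N : ℕ) (hN : 1 ≤ N) (Tr κ δ μ1 μ2 μ3 : ℝ)
    (hTr : 0 < Tr) (hκ : 2 < κ) (hδ : 0 ≤ δ) (hμ1 : δ < μ1)
    (hμ2 : 0 < μ2) (hμ3 : 0 < μ3)
    (σ : ℝ → Fin N → ℝ) (hσc : Continuous σ)
    (d : ℝ → Fin N → ℝ) (hd : ∀ t : ℝ, 0 ≤ t → ∀ k, |d t k| ≤ δ)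
    (s : ℝ → Fin N → ℝ)
    (hs : ∀ t : ℝ, ∀ k, |s t k| ≤ 1 ∧ s t k * σ t k = |σ t k|)
    (hder : ∀ k, ∀ t : ℝ, 0 ≤ t → t ≠ Tr →
      HasDerivAt (fun τ => σ τ k)
        (-μ1 * s t k - (μ2 + μ3 * gain κ Tr t) * σ t k + d t k) t) :
    (∀ t : ℝ, 0 ≤ t → t < Tr →
      Real.sqrt (∑ k, σ t k ^ 2) ≤
        ((Tr - t) / Tr) ^ (κ * μ3) * Real.exp (-μ2 * t) *
          Real.sqrt (∑ k, σ 0 k ^ 2)) ∧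
    (∀ t : ℝ, Tr ≤ t → σ t = 0) := by
  set c : ℝ := κ * μ3 with hc_def
  have hc : 0 < c := mul_pos (by linarith) hμ3
  have hσk : ∀ k, Continuous (fun τ => σ τ k) := fun k => (continuous_apply k).comp hσc
  -- sign/disturbance inequality: σ * (-μ1 * s + d) ≤ 0
  have hkey : ∀ (x : ℝ), 0 ≤ x → ∀ k, σ x k * (-μ1 * s x k + d x k) ≤ 0 := by
    intro x hx k
    have h1 := (hs x k).2
    have h2 := hd x hx k
    have h3 : σ x k * d x k ≤ δ * |σ x k| := by
      calc σ x k * d x k ≤ |σ x k * d x k| := le_abs_self _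
        _ = |σ x k| * |d x k| := abs_mul _ _
        _ ≤ |σ x k| * δ := mul_le_mul_of_nonneg_left h2 (abs_nonneg _)
        _ = δ * |σ x k| := mul_comm _ _
    have h4 : σ x k * (μ1 * s x k) = μ1 * |σ x k| := by rw [← h1]; ring
    have h5 : 0 ≤ |σ x k| := abs_nonneg _
    nlinarith
  -- Part 1 core: per-component squared bound on [0, Tr)
  have main : ∀ t : ℝ, 0 ≤ t → t < Tr → ∀ k,
      σ t k ^ 2 ≤ (((Tr - t) / Tr) ^ c * Real.exp (-μ2 * t)) ^ 2 * σ 0 k ^ 2 := by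
    intro t ht htT k
    have hTt : 0 < Tr - t := by linarith
    set g : ℝ → ℝ := fun τ => σ τ k * ((Tr - τ) ^ (-c) * Real.exp (μ2 * τ)) with hg_def
    have hgb : g t ^ 2 ≤ g 0 ^ 2 := by
      apply sq_le_sq_of_deriv_mul_nonpos ht
      · -- continuity on Icc 0 t
        apply ContinuousOn.mul ((hσk k).continuousOn)
        apply ContinuousOn.mul
        · apply ContinuousOn.rpow_const (by fun_prop)
          intro x hx
          rw [Set.mem_Icc] at hx
          exact Or.inl (by nlinarith [hx.2])
        · fun_prop
      · intro x hx
        rw [Set.mem_Ioo] at hx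
        have hx0 : (0:ℝ) ≤ x := le_of_lt hx.1
        have hxT : x < Tr := lt_trans hx.2 htT
        have hne : Tr - x ≠ 0 := ne_of_gt (by linarith)
        have hD := hder k x hx0 (by linarith)
        have hgain : gain κ Tr x = κ / (Tr - x) := by
          simp [gain, hx0, hxT]
        have hA : HasDerivAt (fun τ => (Tr - τ) ^ (-c) : ℝ → ℝ)
            ((-1) * (-c) * (Tr - x) ^ (-c - 1)) x :=
          ((hasDerivAt_id x).const_sub Tr).rpow_const (Or.inl hne)
        have hE : HasDerivAt (fun τ => Real.exp (μ2 * τ))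
            (Real.exp (μ2 * x) * (μ2 * 1)) x :=
          ((hasDerivAt_id x).const_mul μ2).exp
        have hg : HasDerivAt g
            ((-μ1 * s x k - (μ2 + μ3 * gain κ Tr x) * σ x k + d x k) *
              ((Tr - x) ^ (-c) * Real.exp (μ2 * x)) +
             σ x k * ((-1) * (-c) * (Tr - x) ^ (-c - 1) * Real.exp (μ2 * x) +
               (Tr - x) ^ (-c) * (Real.exp (μ2 * x) * (μ2 * 1)))) x :=
          hD.mul (hA.mul hE)
        have hpow : (Tr - x) ^ (-c - 1) = (Tr - x) ^ (-c) / (Tr - x) := by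
          rw [Real.rpow_sub (by linarith), Real.rpow_one]
        have heq : (-μ1 * s x k - (μ2 + μ3 * gain κ Tr x) * σ x k + d x k) *
              ((Tr - x) ^ (-c) * Real.exp (μ2 * x)) +
             σ x k * ((-1) * (-c) * (Tr - x) ^ (-c - 1) * Real.exp (μ2 * x) +
               (Tr - x) ^ (-c) * (Real.exp (μ2 * x) * (μ2 * 1))) =
            (-μ1 * s x k + d x k) * ((Tr - x) ^ (-c) * Real.exp (μ2 * x)) := by
          rw [hpow, hgain, hc_def]
          field_simp
          ring
        rw [heq] at hg
        refine ⟨_, hg, ?_⟩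
        have hk := hkey x hx0 k
        have hsq : (0:ℝ) ≤ ((Tr - x) ^ (-c) * Real.exp (μ2 * x)) ^ 2 := sq_nonneg _
        have : g x * ((-μ1 * s x k + d x k) * ((Tr - x) ^ (-c) * Real.exp (μ2 * x))) =
            (σ x k * (-μ1 * s x k + d x k)) *
              ((Tr - x) ^ (-c) * Real.exp (μ2 * x)) ^ 2 := by
          simp only [hg_def]; ring
        rw [this]
        exact mul_nonpos_of_nonpos_of_nonneg hk hsq
    -- unfold g at endpoints and rearrange
    have hg0 : g 0 = σ 0 k * Tr ^ (-c) := by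
      simp [hg_def]
    have hgt : g t = σ t k * ((Tr - t) ^ (-c) * Real.exp (μ2 * t)) := rfl
    set P : ℝ := (Tr - t) ^ c with hP_def
    set Q : ℝ := Tr ^ c with hQ_def
    set E : ℝ := Real.exp (μ2 * t) with hE_def
    have hP : 0 < P := Real.rpow_pos_of_pos hTt c
    have hQ : 0 < Q := Real.rpow_pos_of_pos hTr c
    have hE0 : 0 < E := Real.exp_pos _
    have hPinv : (Tr - t) ^ (-c) = P⁻¹ := by rw [Real.rpow_neg hTt.le]
    have hQinv : Tr ^ (-c) = Q⁻¹ := by rw [Real.rpow_neg hTr.le]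
    have hdiv : ((Tr - t) / Tr) ^ c = P / Q := Real.div_rpow hTt.le hTr.le c
    have hexp : Real.exp (-μ2 * t) = E⁻¹ := by
      rw [hE_def, ← Real.exp_neg]; ring_nf
    rw [hgt, hg0, hPinv, hQinv] at hgb
    rw [hdiv, hexp]
    have h2 : σ t k ^ 2 * (P⁻¹ * E) ^ 2 ≤ σ 0 k ^ 2 * (Q⁻¹) ^ 2 := by
      calc σ t k ^ 2 * (P⁻¹ * E) ^ 2 = (σ t k * (P⁻¹ * E)) ^ 2 := by ring
        _ ≤ (σ 0 k * Q⁻¹) ^ 2 := hgb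
        _ = σ 0 k ^ 2 * (Q⁻¹) ^ 2 := by ring
    have h3 : σ t k ^ 2 = σ t k ^ 2 * (P⁻¹ * E) ^ 2 * (P * E⁻¹) ^ 2 := by
      field_simp
    rw [h3]
    calc σ t k ^ 2 * (P⁻¹ * E) ^ 2 * (P * E⁻¹) ^ 2
        ≤ σ 0 k ^ 2 * (Q⁻¹) ^ 2 * (P * E⁻¹) ^ 2 :=
          mul_le_mul_of_nonneg_right h2 (sq_nonneg _)
      _ = (P / Q * E⁻¹) ^ 2 * σ 0 k ^ 2 := by field_simp
  -- Part 1 conclusion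
  have part1 : ∀ t : ℝ, 0 ≤ t → t < Tr →
      Real.sqrt (∑ k, σ t k ^ 2) ≤
        ((Tr - t) / Tr) ^ c * Real.exp (-μ2 * t) * Real.sqrt (∑ k, σ 0 k ^ 2) := by
    intro t ht htT
    set B : ℝ := ((Tr - t) / Tr) ^ c * Real.exp (-μ2 * t) with hB_def
    have hB : 0 ≤ B := by
      apply mul_nonneg _ (Real.exp_nonneg _)
      exact Real.rpow_nonneg (div_nonneg (by linarith) hTr.le) c
    have hsum : ∑ k, σ t k ^ 2 ≤ B ^ 2 * ∑ k, σ 0 k ^ 2 := by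
      rw [Finset.mul_sum]
      exact Finset.sum_le_sum fun k _ => main t ht htT k
    calc Real.sqrt (∑ k, σ t k ^ 2) ≤ Real.sqrt (B ^ 2 * ∑ k, σ 0 k ^ 2) :=
          Real.sqrt_le_sqrt hsum
      _ = B * Real.sqrt (∑ k, σ 0 k ^ 2) := by
          rw [Real.sqrt_mul (sq_nonneg B), Real.sqrt_sq hB]
  -- σ Tr = 0
  have hTr0 : σ Tr = 0 := by
    funext k
    have hbound : ∀ t : ℝ, 0 ≤ t → t < Tr →
        |σ t k| ≤ ((Tr - t) / Tr) ^ c * |σ 0 k| := by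
      intro t ht htT
      have h1 := main t ht htT k
      have hψ : 0 ≤ ((Tr - t) / Tr) ^ c :=
        Real.rpow_nonneg (div_nonneg (by linarith) hTr.le) c
      have hexp1 : Real.exp (-μ2 * t) ≤ 1 := by
        rw [Real.exp_le_one_iff]; nlinarith
      have h2 : σ t k ^ 2 ≤ (((Tr - t) / Tr) ^ c * |σ 0 k|) ^ 2 := by
        have hexp0 : 0 ≤ Real.exp (-μ2 * t) := Real.exp_nonneg _
        have hE2 : Real.exp (-μ2 * t) ^ 2 ≤ 1 := by nlinarith
        have hr : (((Tr - t) / Tr) ^ c * |σ 0 k|) ^ 2 =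
            (((Tr - t) / Tr) ^ c) ^ 2 * σ 0 k ^ 2 := by rw [mul_pow, sq_abs]
        nlinarith [mul_nonneg (sq_nonneg (((Tr - t) / Tr) ^ c)) (sq_nonneg (σ 0 k))]
      calc |σ t k| = Real.sqrt (σ t k ^ 2) := (Real.sqrt_sq_eq_abs _).symm
        _ ≤ Real.sqrt ((((Tr - t) / Tr) ^ c * |σ 0 k|) ^ 2) := Real.sqrt_le_sqrt h2
        _ = ((Tr - t) / Tr) ^ c * |σ 0 k| :=
            Real.sqrt_sq (mul_nonneg hψ (abs_nonneg _))
    have l1 : Filter.Tendsto (fun t => ((Tr - t) / Tr) ^ c * |σ 0 k|)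
        (nhdsWithin Tr (Set.Iio Tr)) (nhds 0) := by
      have lb : Filter.Tendsto (fun t : ℝ => (Tr - t) / Tr)
          (nhdsWithin Tr (Set.Iio Tr)) (nhds 0) := by
        have : Filter.Tendsto (fun t : ℝ => (Tr - t) / Tr) (nhds Tr)
            (nhds ((Tr - Tr) / Tr)) :=
          ((continuous_const.sub continuous_id).div_const Tr).continuousAt
        simpa using this.mono_left nhdsWithin_le_nhds
      have lr := lb.rpow_const (Or.inr hc.le)
      rw [Real.zero_rpow hc.ne'] at lr
      simpa using lr.mul_const |σ 0 k|
    have l3 : Filter.Tendsto (fun t => |σ t k|) (nhdsWithin Tr (Set.Iio Tr))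
        (nhds |σ Tr k|) :=
      (((hσk k).abs).continuousAt).tendsto.mono_left nhdsWithin_le_nhds
    have hev : (fun t => |σ t k|) ≤ᶠ[nhdsWithin Tr (Set.Iio Tr)]
        fun t => ((Tr - t) / Tr) ^ c * |σ 0 k| := by
      filter_upwards [Ioo_mem_nhdsLT_of_mem (Set.mem_Ioc.mpr ⟨hTr, le_refl Tr⟩)]
        with t ht
      exact hbound t ht.1.le ht.2
    have hle : |σ Tr k| ≤ 0 := le_of_tendsto_of_tendsto l3 l1 hev
    simpa using abs_nonpos_iff.mp hle
  -- Part 2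
  refine ⟨part1, fun t htT => ?_⟩
  rcases eq_or_lt_of_le htT with h | h
  · rw [← h]; exact hTr0
  · funext k
    simp only [Pi.zero_apply]
    set g2 : ℝ → ℝ := fun τ => σ τ k * Real.exp (μ2 * τ) with hg2_def
    have hgb : g2 t ^ 2 ≤ g2 Tr ^ 2 := by
      apply sq_le_sq_of_deriv_mul_nonpos (le_of_lt h)
      · exact ((hσk k).mul (Real.continuous_exp.comp
          (continuous_const.mul continuous_id))).continuousOn
      · intro x hx
        rw [Set.mem_Ioo] at hx
        have hx0 : (0:ℝ) ≤ x := le_trans hTr.le (le_of_lt hx.1)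
        have hD := hder k x hx0 (ne_of_gt hx.1)
        have hgain : gain κ Tr x = 0 := by
          unfold gain
          rw [if_neg (by rintro ⟨-, h2⟩; exact absurd h2 (not_lt.mpr (le_of_lt hx.1)))]
        have hE : HasDerivAt (fun τ => Real.exp (μ2 * τ))
            (Real.exp (μ2 * x) * (μ2 * 1)) x :=
          ((hasDerivAt_id x).const_mul μ2).exp
        have hg := hD.mul hE
        have heq : (-μ1 * s x k - (μ2 + μ3 * gain κ Tr x) * σ x k + d x k) *
              Real.exp (μ2 * x) + σ x k * (Real.exp (μ2 * x) * (μ2 * 1)) =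
            (-μ1 * s x k + d x k) * Real.exp (μ2 * x) := by
          rw [hgain]; ring
        rw [heq] at hg
        refine ⟨_, hg, ?_⟩
        have hk := hkey x hx0 k
        have : g2 x * ((-μ1 * s x k + d x k) * Real.exp (μ2 * x)) =
            (σ x k * (-μ1 * s x k + d x k)) * Real.exp (μ2 * x) ^ 2 := by
          simp only [hg2_def]; ring
        rw [this]
        exact mul_nonpos_of_nonpos_of_nonneg hk (sq_nonneg _)
    have hgTr : g2 Tr = 0 := by
      simp [hg2_def, congrFun hTr0 k]
    rw [hgTr] at hgb
    have hzero : g2 t = 0 := by nlinarith [sq_nonneg (g2 t)]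
    have hexp : Real.exp (μ2 * t) ≠ 0 := Real.exp_ne_zero _
    have := mul_eq_zero.mp hzero
    rcases this with h' | h'
    · exact h'
    · exact absurd h' hexp
end
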